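/- arXiv:2001.07116 — 5 statements merged into one kernel-verified Lean document; each statement's English description precedes it below -/
import Mathlib

section
/- Fix an integer n ≥ 1 and a wave number k > 0. There exist constants C > 0 and R > 0 such that for every z ∈ ℂ with |z| ≥ R and |arg z| < π, |z·f_n^2(z) + ℋ_n(k)·cos(z − nπ/2 − π/2)| ≤ C e^{|Im z|}/|z|. -/
open Complex Real Filter

/-- Spherical Bessel function of the first kind of order `n`, as an entire function. -/
noncomputable def sphJ (n : ℕ) (z : ℂ) : ℂ :=
  ∑' m : ℕ, ((-1 : ℂ) ^ m * z ^ (n + 2 * m)) /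
    ((2 : ℂ) ^ m * (m.factorial : ℂ) * (Nat.doubleFactorial (2 * n + 2 * m + 1) : ℂ))

/-- Spherical Hankel function of the first kind of order `n` (for `z ≠ 0`). -/
noncomputable def sphH (n : ℕ) (z : ℂ) : ℂ :=
  (-Complex.I) ^ (n + 1) * Complex.exp (Complex.I * z) / z *
    ∑ m ∈ Finset.range (n + 1),
      (Complex.I ^ m * ((n + m).factorial : ℂ)) /
        ((m.factorial : ℂ) * (2 * z) ^ m * ((n - m).factorial : ℂ))

/-- `𝒥_n(z) = j_n(z) + z j_n'(z)`. -/
noncomputable def calJ (n : ℕ) (z : ℂ) : ℂ := sphJ n z + z * deriv (sphJ n) z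

/-- `ℋ_n(z) = h_n^{(1)}(z) + z (h_n^{(1)})'(z)`. -/
noncomputable def calH (n : ℕ) (z : ℂ) : ℂ := sphH n z + z * deriv (sphH n) z

/-- `f_n^1(z) = h_n^{(1)}(k) 𝒥_n(z) − j_n(z) ℋ_n(k)`. -/
noncomputable def f1 (n : ℕ) (k : ℝ) (z : ℂ) : ℂ :=
  sphH n (k : ℂ) * calJ n z - sphJ n z * calH n (k : ℂ)

/-- `f_n^2(z) = (k²/z²) h_n^{(1)}(k) 𝒥_n(z) − j_n(z) ℋ_n(k)`. -/
noncomputable def f2 (n : ℕ) (k : ℝ) (z : ℂ) : ℂ :=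
  ((k : ℂ) ^ 2 / z ^ 2) * sphH n (k : ℂ) * calJ n z - sphJ n z * calH n (k : ℂ)

/-- `z̃¹_{n,l} = (1 + 2l + n)π/2`. -/
noncomputable def zt1 (n l : ℕ) : ℂ := ((1 + 2 * l + n : ℕ) : ℂ) * (Real.pi : ℂ) / 2

/-- `z̃²_{n,l} = (2l + n)π/2`. -/
noncomputable def zt2 (n l : ℕ) : ℂ := ((2 * l + n : ℕ) : ℂ) * (Real.pi : ℂ) / 2

/-- `g_n(w) = 𝒥_n(w)/w`, extended through the removable singularity at `w = 0`. -/
noncomputable def gfun (n : ℕ) (w : ℂ) : ℂ :=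
  if w = 0 then deriv (calJ n) 0 else calJ n w / w


/-!
By the three-term recurrence `z j_{n+2} + z j_n = (2n+3) j_{n+1}`, started from `z j_0 = sin z`
and `z² j_1 = sin z - z cos z`, one has `z j_n(z) = p(1/z) sin z + q(1/z) cos z` for polynomials
`p, q` whose constant terms make the leading part equal to `cos (z - (n+1)π/2)`. Then
`𝒥_n = (z j_n)'` has the same shape, and polynomials in `1/z` are bounded for large `|z|` while
`|sin z|, |cos z| ≤ e^{|Im z|}`; so `𝒥_n(z) = O(e^{|Im z|})` and
`z j_n(z) - cos (z - (n+1)π/2) = O(e^{|Im z|}/|z|)`. Finally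
`z f_n^2(z) + ℋ_n(k) cos (z - (n+1)π/2)`
`  = k² h_n(k) 𝒥_n(z)/z - ℋ_n(k) (z j_n(z) - cos (z - (n+1)π/2))`.
-/

open Polynomial Asymptotics Topology Bornology

noncomputable def sphJTerm (n : ℕ) (z : ℂ) (m : ℕ) : ℂ :=
  (-1 : ℂ) ^ m * z ^ (n + 2 * m) /
    ((2 : ℂ) ^ m * (m.factorial : ℂ) * (Nat.doubleFactorial (2 * n + 2 * m + 1) : ℂ))

lemma summable_sphJTerm (n : ℕ) (z : ℂ) : Summable (sphJTerm n z) := by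
  refine Summable.of_norm_bounded
    ((Real.summable_pow_div_factorial (‖z‖ ^ 2)).mul_left (‖z‖ ^ n)) fun m => ?_
  have hden : m.factorial ≤ 2 ^ m * m.factorial * Nat.doubleFactorial (2 * n + 2 * m + 1) :=
    (Nat.le_mul_of_pos_left _ (by positivity)).trans
      (Nat.le_mul_of_pos_right _ (Nat.doubleFactorial_pos _))
  simp only [sphJTerm, norm_div, norm_mul, norm_pow, norm_neg, norm_one, one_pow, one_mul,
    Complex.norm_natCast, Complex.norm_ofNat, pow_add, pow_mul, mul_div_assoc]
  gcongr
  exact_mod_cast hden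

lemma hasSum_sphJTerm (n : ℕ) (z : ℂ) : HasSum (sphJTerm n z) (sphJ n z) :=
  (summable_sphJTerm n z).hasSum

lemma Nat.factorial_two_mul_add_one_eq (m : ℕ) :
    (2 * m + 1).factorial = 2 ^ m * m.factorial * Nat.doubleFactorial (2 * m + 1) := by
  rw [Nat.factorial_eq_mul_doubleFactorial, Nat.doubleFactorial_two_mul]; ring

lemma mul_sphJ_zero (z : ℂ) : z * sphJ 0 z = sin z := by
  refine ((hasSum_sphJTerm 0 z).mul_left z).unique ?_
  have hterm (m : ℕ) :
      z * sphJTerm 0 z m = (-1) ^ m * z ^ (2 * m + 1) / ((2 * m + 1).factorial : ℂ) := by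
    rw [sphJTerm, Nat.factorial_two_mul_add_one_eq]
    push_cast
    ring_nf
  simpa only [hterm] using Complex.hasSum_sin z

lemma one_div_sub_div_eq_one_div {K : Type*} [Field K] {a b c s x y : K} (ha : a ≠ 0)
    (hab : a = x * b) (hac : a = y * c) (hxy : x - s = y) : 1 / b - s / a = 1 / c := by
  have hb : b ≠ 0 := right_ne_zero_of_mul (hab ▸ ha)
  have hc : c ≠ 0 := right_ne_zero_of_mul (hac ▸ ha)
  rw [div_sub_div _ _ hb ha, div_eq_div_iff (mul_ne_zero hb ha) hc]
  linear_combination c * hab - b * hac + b * c * hxy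

lemma sq_mul_sphJ_one (z : ℂ) : z ^ 2 * sphJ 1 z = sin z - z * cos z := by
  -- the `m = 0` terms of the series of `sin z` and `z cos z` cancel, so the index shifts by one
  have h := (hasSum_nat_add_iff' 1).mpr
    ((Complex.hasSum_sin z).sub ((Complex.hasSum_cos z).mul_left z))
  have hterm (m : ℕ) :
      (-1) ^ (m + 1) * z ^ (2 * (m + 1) + 1) / ((2 * (m + 1) + 1).factorial : ℂ) -
        z * ((-1) ^ (m + 1) * z ^ (2 * (m + 1)) / ((2 * (m + 1)).factorial : ℂ)) =
      z ^ 2 * sphJTerm 1 z m := by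
    have key := one_div_sub_div_eq_one_div (s := (1 : ℂ)) (x := 2 * m + 3) (y := 2 * (m + 1))
      (a := ((2 * (m + 1) + 1).factorial : ℂ)) (b := ((2 * (m + 1)).factorial : ℂ))
      (c := 2 ^ m * (m.factorial : ℂ) * (2 * 1 + 2 * m + 1).doubleFactorial)
      (Nat.cast_ne_zero.mpr (Nat.factorial_ne_zero _))
      (by rw [Nat.factorial_succ]; push_cast; ring)
      (by rw [Nat.factorial_two_mul_add_one_eq, show 2 * (m + 1) + 1 = 2 * 1 + 2 * m + 1 by ring,
            Nat.factorial_succ]; push_cast; ring)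
      (by ring)
    rw [sphJTerm]
    linear_combination (-1 : ℂ) ^ m * z ^ (2 * m + 3) * key
  simp only [Finset.range_one, Finset.sum_singleton, hterm] at h
  exact ((hasSum_sphJTerm 1 z).mul_left (z ^ 2)).unique (by simpa using h)

lemma mul_sphJ_add_two (n : ℕ) (z : ℂ) :
    z * sphJ (n + 2) z = (2 * n + 3) * sphJ (n + 1) z - z * sphJ n z := by
  have hu : HasSum (fun m => (2 * n + 3 : ℂ) * sphJTerm (n + 1) z m - z * sphJTerm n z m)
      ((2 * n + 3) * sphJ (n + 1) z - z * sphJ n z) :=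
    ((hasSum_sphJTerm (n + 1) z).mul_left _).sub ((hasSum_sphJTerm n z).mul_left z)
  have h := (hasSum_nat_add_iff' 1).mpr hu
  have h0 : (2 * n + 3) * sphJTerm (n + 1) z 0 - z * sphJTerm n z 0 = 0 := by
    have : (2 * n + 3 : ℂ) ≠ 0 := by norm_cast
    have : ((2 * n + 1).doubleFactorial : ℂ) ≠ 0 := Nat.cast_ne_zero.mpr (by positivity)
    rw [sphJTerm, sphJTerm, show 2 * (n + 1) + 2 * 0 + 1 = 2 * n + 1 + 2 by ring,
      Nat.doubleFactorial_add_two, Nat.cast_mul, show ((2 * n + 1 + 2 : ℕ) : ℂ) = 2 * n + 3 by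
        push_cast; ring]
    field_simp
    ring
  have hterm (m : ℕ) :
      (2 * n + 3) * sphJTerm (n + 1) z (m + 1) - z * sphJTerm n z (m + 1) =
        z * sphJTerm (n + 2) z m := by
    have key := one_div_sub_div_eq_one_div (s := (2 * n + 3 : ℂ)) (x := 2 * n + 2 * m + 5)
      (y := 2 * (m + 1))
      (a := 2 ^ (m + 1) * ((m + 1).factorial : ℂ) * (2 * (n + 1) + 2 * (m + 1) + 1).doubleFactorial)
      (b := 2 ^ (m + 1) * ((m + 1).factorial : ℂ) * (2 * n + 2 * (m + 1) + 1).doubleFactorial)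
      (c := 2 ^ m * (m.factorial : ℂ) * (2 * (n + 2) + 2 * m + 1).doubleFactorial)
      (mul_ne_zero (mul_ne_zero (by simp) (by simp [Nat.factorial_ne_zero]))
        (Nat.cast_ne_zero.mpr (by positivity)))
      (by rw [show 2 * (n + 1) + 2 * (m + 1) + 1 = 2 * n + 2 * (m + 1) + 1 + 2 by ring,
            Nat.doubleFactorial_add_two]; push_cast; ring)
      (by rw [show 2 * (n + 2) + 2 * m + 1 = 2 * (n + 1) + 2 * (m + 1) + 1 by ring,
            Nat.factorial_succ]; push_cast; ring)
      (by ring)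
    simp only [sphJTerm]
    linear_combination (-1 : ℂ) ^ m * z ^ (n + 2 * m + 3) * key
  simp only [Finset.range_one, Finset.sum_singleton, h0, sub_zero, hterm] at h
  exact ((hasSum_sphJTerm (n + 2) z).mul_left z).unique h


namespace Complex

lemma norm_exp_mul_I_le (z : ℂ) : ‖exp (z * I)‖ ≤ Real.exp |z.im| := by
  rw [norm_exp]
  simpa using Real.exp_le_exp.mpr (neg_le_abs z.im)

lemma norm_exp_neg_mul_I_le (z : ℂ) : ‖exp (-z * I)‖ ≤ Real.exp |z.im| := by
  rw [norm_exp]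
  simpa using Real.exp_le_exp.mpr (le_abs_self z.im)

lemma norm_sin_le_exp_abs_im (z : ℂ) : ‖sin z‖ ≤ Real.exp |z.im| := by
  rw [Complex.sin, norm_div, norm_mul, norm_I, mul_one, Complex.norm_two]
  linarith [norm_sub_le (exp (-z * I)) (exp (z * I)), norm_exp_mul_I_le z, norm_exp_neg_mul_I_le z]

lemma norm_cos_le_exp_abs_im (z : ℂ) : ‖cos z‖ ≤ Real.exp |z.im| := by
  rw [Complex.cos, norm_div, Complex.norm_two]
  linarith [norm_add_le (exp (z * I)) (exp (-z * I)), norm_exp_mul_I_le z, norm_exp_neg_mul_I_le z]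


lemma sin_isBigO_exp_abs_im {l : Filter ℂ} :
    Complex.sin =O[l] fun z : ℂ => Real.exp |z.im| :=
  isBigO_of_le _ fun z => by simpa [abs_of_pos (Real.exp_pos _)] using norm_sin_le_exp_abs_im z

lemma cos_isBigO_exp_abs_im {l : Filter ℂ} :
    Complex.cos =O[l] fun z : ℂ => Real.exp |z.im| :=
  isBigO_of_le _ fun z => by simpa [abs_of_pos (Real.exp_pos _)] using norm_cos_le_exp_abs_im z

end Complex

noncomputable def trigInvPoly (p q : ℂ[X]) (z : ℂ) : ℂ :=
  p.eval z⁻¹ * sin z + q.eval z⁻¹ * cos z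

lemma hasDerivAt_trigInvPoly (p q : ℂ[X]) {z : ℂ} (hz : z ≠ 0) :
    HasDerivAt (trigInvPoly p q)
      (trigInvPoly (-(X ^ 2 * derivative p) - q) (p - X ^ 2 * derivative q) z) z := by
  have hp := (p.hasDerivAt z⁻¹).comp z (hasDerivAt_inv hz)
  have hq := (q.hasDerivAt z⁻¹).comp z (hasDerivAt_inv hz)
  refine ((hp.mul (hasDerivAt_sin z)).add (hq.mul (hasDerivAt_cos z))).congr_deriv ?_
  simp only [trigInvPoly, Function.comp_apply, eval_sub, eval_neg, eval_mul, eval_pow, eval_X]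
  field_simp
  ring

lemma trigInvPoly_eq_add_inv_mul (p q : ℂ[X]) (z : ℂ) :
    trigInvPoly p q z =
      p.coeff 0 * sin z + q.coeff 0 * cos z + z⁻¹ * trigInvPoly p.divX q.divX z := by
  conv_lhs => rw [trigInvPoly, ← divX_mul_X_add p, ← divX_mul_X_add q]
  simp only [trigInvPoly, eval_add, eval_mul, eval_X, eval_C]
  ring

lemma Polynomial.eval_inv_isBigO_one (p : ℂ[X]) :
    (fun z : ℂ => p.eval z⁻¹) =O[cobounded ℂ] fun _ => (1 : ℝ) :=
  ((p.continuous.tendsto 0).comp tendsto_inv₀_cobounded).isBigO_one ℝ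

lemma trigInvPoly_isBigO (p q : ℂ[X]) :
    trigInvPoly p q =O[cobounded ℂ] fun z => Real.exp |z.im| := by
  have hp := (Polynomial.eval_inv_isBigO_one p).mul Complex.sin_isBigO_exp_abs_im
  have hq := (Polynomial.eval_inv_isBigO_one q).mul Complex.cos_isBigO_exp_abs_im
  exact (hp.add hq).congr_right fun z => by simp only [one_mul]

def IsSphJRepr (n : ℕ) (p q : ℂ[X]) : Prop :=
  (∀ z ≠ 0, z * sphJ n z = trigInvPoly p q z) ∧
    p.coeff 0 = Complex.sin ((n + 1 : ℂ) * π / 2) ∧ q.coeff 0 = Complex.cos ((n + 1 : ℂ) * π / 2)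

lemma isSphJRepr_zero : IsSphJRepr 0 1 0 := by
  refine ⟨fun z _ => ?_, ?_, ?_⟩
  · simp [trigInvPoly, mul_sphJ_zero]
  · simp [Complex.sin_pi_div_two]
  · simp [Complex.cos_pi_div_two]

lemma isSphJRepr_one : IsSphJRepr 1 X (-1) := by
  refine ⟨fun z hz => ?_, ?_, ?_⟩
  · have h := sq_mul_sphJ_one z
    simp only [trigInvPoly, eval_X, eval_neg, eval_one]
    field_simp
    linear_combination h
  · norm_num
  · norm_num

lemma IsSphJRepr.add_two {n : ℕ} {p₀ q₀ p₁ q₁ : ℂ[X]} (h₀ : IsSphJRepr n p₀ q₀)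
    (h₁ : IsSphJRepr (n + 1) p₁ q₁) :
    IsSphJRepr (n + 2) (C (2 * n + 3 : ℂ) * X * p₁ - p₀) (C (2 * n + 3 : ℂ) * X * q₁ - q₀) := by
  have hphase : ((n : ℂ) + 2 + 1) * π / 2 = (n + 1) * π / 2 + π := by ring
  refine ⟨fun z hz => ?_, ?_, ?_⟩
  · have hj₁ : sphJ (n + 1) z = z⁻¹ * trigInvPoly p₁ q₁ z := by
      rw [← h₁.1 z hz, inv_mul_cancel_left₀ hz]
    rw [mul_sphJ_add_two, hj₁, h₀.1 z hz]
    simp only [trigInvPoly, eval_sub, eval_mul, eval_C, eval_X]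
    ring
  · simp [mul_assoc, h₀.2.1, hphase, Complex.sin_add_pi]
  · simp [mul_assoc, h₀.2.2, hphase, Complex.cos_add_pi]

lemma exists_isSphJRepr (n : ℕ) : ∃ p q : ℂ[X], IsSphJRepr n p q := by
  induction n using Nat.twoStepInduction with
  | zero => exact ⟨1, 0, isSphJRepr_zero⟩
  | one => exact ⟨X, -1, isSphJRepr_one⟩
  | more n ih₀ ih₁ =>
    obtain ⟨p₀, q₀, h₀⟩ := ih₀
    obtain ⟨p₁, q₁, h₁⟩ := ih₁
    exact ⟨_, _, h₀.add_two h₁⟩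

lemma add_mul_deriv_eq_of_eventually_mul_eq {𝕜 : Type*} [NontriviallyNormedField 𝕜]
    {f g : 𝕜 → 𝕜} {g' z : 𝕜} (hz : z ≠ 0) (hfg : ∀ᶠ w in 𝓝 z, w * f w = g w)
    (hg : HasDerivAt g g' z) : f z + z * deriv f z = g' := by
  have hf : f =ᶠ[𝓝 z] fun w => g w / w := by
    filter_upwards [hfg, eventually_ne_nhds hz] with w hw hw₀
    rw [← hw, mul_div_cancel_left₀ _ hw₀]
  rw [((hg.div (hasDerivAt_id z) hz).congr_of_eventuallyEq hf).deriv, hf.eq_of_nhds, id]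
  field_simp
  ring

lemma IsSphJRepr.calJ_eq {n : ℕ} {p q : ℂ[X]} (h : IsSphJRepr n p q) {z : ℂ} (hz : z ≠ 0) :
    calJ n z = trigInvPoly (-(X ^ 2 * derivative p) - q) (p - X ^ 2 * derivative q) z :=
  add_mul_deriv_eq_of_eventually_mul_eq hz
    (by filter_upwards [eventually_ne_nhds hz] with w hw using h.1 w hw)
    (hasDerivAt_trigInvPoly p q hz)

lemma IsSphJRepr.mul_sphJ_sub_cos_eq {n : ℕ} {p q : ℂ[X]} (h : IsSphJRepr n p q) {z : ℂ}
    (hz : z ≠ 0) :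
    z * sphJ n z - Complex.cos (z - (n + 1 : ℂ) * π / 2) =
      z⁻¹ * trigInvPoly p.divX q.divX z := by
  rw [h.1 z hz, trigInvPoly_eq_add_inv_mul, h.2.1, h.2.2, Complex.cos_sub]
  ring

lemma isBigO_calJ (n : ℕ) : calJ n =O[cobounded ℂ] fun z => Real.exp |z.im| := by
  obtain ⟨p, q, h⟩ := exists_isSphJRepr n
  refine (trigInvPoly_isBigO (-(X ^ 2 * derivative p) - q) (p - X ^ 2 * derivative q)).congr' ?_
    EventuallyEq.rfl
  filter_upwards [eventually_ne_cobounded 0] with z hz using (h.calJ_eq hz).symm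

lemma Asymptotics.IsBigO.inv_mul_div_norm {l : Filter ℂ} {f : ℂ → ℂ} {g : ℂ → ℝ} (h : f =O[l] g) :
    (fun z => z⁻¹ * f z) =O[l] fun z => g z / ‖z‖ := by
  have hinv : (fun z : ℂ => z⁻¹) =O[l] fun z => ‖z‖⁻¹ := isBigO_of_le _ fun z => by simp
  simpa only [div_eq_inv_mul] using hinv.mul h

lemma isBigO_mul_sphJ_sub_cos (n : ℕ) :
    (fun z => z * sphJ n z - Complex.cos (z - (n + 1 : ℂ) * π / 2)) =O[cobounded ℂ]
      fun z => Real.exp |z.im| / ‖z‖ := by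
  obtain ⟨p, q, h⟩ := exists_isSphJRepr n
  refine (trigInvPoly_isBigO p.divX q.divX).inv_mul_div_norm.congr' ?_ EventuallyEq.rfl
  filter_upwards [eventually_ne_cobounded 0] with z hz using (h.mul_sphJ_sub_cos_eq hz).symm

theorem stmt2_general (n : ℕ) (k : ℝ) :
    ∃ C > (0 : ℝ), ∃ R > (0 : ℝ), ∀ z : ℂ, R ≤ ‖z‖ → |Complex.arg z| < Real.pi →
      ‖z * f2 n k z +
          calH n (k : ℂ) * Complex.cos (z - (n : ℂ) * (Real.pi : ℂ) / 2 - (Real.pi : ℂ) / 2)‖ ≤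
        C * Real.exp |z.im| / ‖z‖ := by
  have hsplit : (fun z => z * f2 n k z +
        calH n (k : ℂ) * Complex.cos (z - (n : ℂ) * (Real.pi : ℂ) / 2 - (Real.pi : ℂ) / 2))
      =ᶠ[cobounded ℂ] fun z => (k : ℂ) ^ 2 * sphH n k * (z⁻¹ * calJ n z) -
        calH n k * (z * sphJ n z - Complex.cos (z - (n + 1 : ℂ) * π / 2)) := by
    filter_upwards [eventually_ne_cobounded 0] with z hz
    rw [f2, show z - n * π / 2 - π / 2 = z - (n + 1 : ℂ) * π / 2 by ring]
    field_simp
    ring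
  have hO := (((isBigO_calJ n).inv_mul_div_norm.const_mul_left ((k : ℂ) ^ 2 * sphH n k)).sub
    ((isBigO_mul_sphJ_sub_cos n).const_mul_left (calH n k))).congr' hsplit.symm EventuallyEq.rfl
  obtain ⟨C, hC, hCO⟩ := hO.exists_pos
  obtain ⟨R, -, hR⟩ := hasBasis_cobounded_norm.eventually_iff.mp hCO.bound
  refine ⟨C, hC, max R 1, by positivity, fun z hz _ => ?_⟩
  have hbound := hR (le_trans (le_max_left R 1) hz)
  rwa [Real.norm_of_nonneg (by positivity), ← mul_div_assoc] at hbound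

/-- asymptotics of `z f_n^2(z)` for large `|z|` with `|arg z| < π`. -/
theorem stmt2 (n : ℕ) (hn : 1 ≤ n) (k : ℝ) (hk : 0 < k) :
    ∃ C > (0 : ℝ), ∃ R > (0 : ℝ), ∀ z : ℂ, R ≤ ‖z‖ → |Complex.arg z| < Real.pi →
      ‖z * f2 n k z +
          calH n (k : ℂ) * Complex.cos (z - (n : ℂ) * (Real.pi : ℂ) / 2 - (Real.pi : ℂ) / 2)‖ ≤
        C * Real.exp |z.im| / ‖z‖ :=
  stmt2_general n k
end

section
/- Fix an integer n ≥ 1, a wave number k > 0, a constant C > 0 and L ∈ ℕ. (i) If (z_l)_{l ≥ L} are complex numbers with f_n^1(z_l) = 0 and |z_l − z̃¹_{n,l}| ≤ C/l for all l ≥ L, then z_l² ≠ k² for all sufficiently large l, and, setting λ_l := k²/(z_l² − k²), there exists C′ > 0 such that |λ_l − 4k²/((1+2l+n)²π²)| ≤ C′ l^{−4} for all sufficiently large l. (ii) Likewise, if (z_l)_{l ≥ L} satisfy f_n^2(z_l) = 0 and |z_l − z̃²_{n,l}| ≤ C/l for all l ≥ L, then there exists C′ > 0 such that |k²/(z_l²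 − k²) − 4k²/((2l+n)²π²)| ≤ C′ l^{−4} for all sufficiently large l. -/
open Complex Real Filter

/-!
Write `ρ_l = z̃_{n,l}`, which grows like `l`, so that `4k²/((…)²π²) = k²/ρ_l²`.
From `z_l = ρ_l + O(1/l)` one gets `z_l² − ρ_l² = (z_l − ρ_l)(z_l + ρ_l) = O(1)`, so
`z_l² − k² ∼ ρ_l²`, and therefore
`k²/(z_l² − k²) − k²/ρ_l² = k² (k² − (z_l² − ρ_l²)) / ((z_l² − k²) ρ_l²) = O(l⁻⁴)`.
-/

open Asymptotics

section Perturbation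

variable {α 𝕜 : Type*} [NormedField 𝕜] {l : Filter α} {r ρ z : α → 𝕜}

lemma eventually_ne_zero_of_tendsto_norm_atTop (hr : Tendsto (fun x => ‖r x‖) l atTop) :
    ∀ᶠ x in l, r x ≠ 0 :=
  (hr.eventually_ne_atTop 0).mono fun _ => norm_ne_zero_iff.1

lemma isLittleO_one_of_tendsto_norm_atTop (hr : Tendsto (fun x => ‖r x‖) l atTop) {m : ℕ}
    (hm : m ≠ 0) : (fun _ => (1 : 𝕜)) =o[l] fun x => r x ^ m := by
  refine (isLittleO_one_left_iff 𝕜).2 ?_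
  simp only [norm_pow]
  exact (tendsto_pow_atTop hm).comp hr

lemma inv_isBigO_one_of_tendsto_norm_atTop (hr : Tendsto (fun x => ‖r x‖) l atTop) :
    (fun x => (r x)⁻¹) =O[l] fun _ => (1 : 𝕜) := by
  refine Tendsto.isBigO_one 𝕜 (c := (0 : 𝕜)) ?_
  rw [tendsto_zero_iff_norm_tendsto_zero]
  exact hr.inv_tendsto_atTop.congr fun x => (norm_inv (r x)).symm

lemma sq_sub_sq_isBigO_one (hr : Tendsto (fun x => ‖r x‖) l atTop) (hρ : ρ =O[l] r)
    (hz : (z - ρ) =O[l] fun x => (r x)⁻¹) :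
    (fun x => z x ^ 2 - ρ x ^ 2) =O[l] fun _ => (1 : 𝕜) := by
  have hsum : (fun x => z x + ρ x) =O[l] r := by
    have hone : (fun _ => (1 : 𝕜)) =O[l] r := by
      simpa only [pow_one] using (isLittleO_one_of_tendsto_norm_atTop hr one_ne_zero).isBigO
    have hdiff : (z - ρ) =O[l] r :=
      (hz.trans (inv_isBigO_one_of_tendsto_norm_atTop hr)).trans hone
    simpa [two_mul, add_assoc] using hdiff.add (hρ.add hρ)
  refine ((hz.mul hsum).congr' (Eventually.of_forall fun x => ?_) ?_)
  · simp only [Pi.sub_apply]; ring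
  · filter_upwards [eventually_ne_zero_of_tendsto_norm_atTop hr] with x hx
      using inv_mul_cancel₀ hx

lemma sq_sub_isEquivalent_sq (κ : 𝕜) (hr : Tendsto (fun x => ‖r x‖) l atTop) (hρ : ρ =Θ[l] r)
    (hz : (z - ρ) =O[l] fun x => (r x)⁻¹) :
    (fun x => z x ^ 2 - κ) ~[l] fun x => ρ x ^ 2 := by
  have hbdd : (fun x => z x ^ 2 - ρ x ^ 2 - κ) =O[l] fun _ => (1 : 𝕜) :=
    (sq_sub_sq_isBigO_one hr hρ.isBigO hz).sub (isBigO_const_one 𝕜 κ l)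
  have hgrow : (fun _ => (1 : 𝕜)) =o[l] fun x => ρ x ^ 2 :=
    (isLittleO_one_of_tendsto_norm_atTop hr two_ne_zero).trans_isBigO (hρ.isBigO_symm.pow 2)
  refine IsLittleO.isEquivalent ((hbdd.trans_isLittleO hgrow).congr_left fun x => ?_)
  simp only [Pi.sub_apply]; ring

lemma div_sq_sub_sub_div_sq_isBigO (κ : 𝕜) (hr : Tendsto (fun x => ‖r x‖) l atTop)
    (hρ : ρ =Θ[l] r) (hz : (z - ρ) =O[l] fun x => (r x)⁻¹) :
    (∀ᶠ x in l, z x ^ 2 ≠ κ) ∧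
      (fun x => κ / (z x ^ 2 - κ) - κ / ρ x ^ 2) =O[l] fun x => (r x ^ 4)⁻¹ := by
  have hequiv := sq_sub_isEquivalent_sq κ hr hρ hz
  have hρ0 : ∀ᶠ x in l, ρ x ≠ 0 := by
    filter_upwards [hρ.isBigO_symm.eq_zero_imp, eventually_ne_zero_of_tendsto_norm_atTop hr]
      with x hρr hx
    exact fun h0 => hx (hρr h0)
  have hw0 : ∀ᶠ x in l, z x ^ 2 - κ ≠ 0 := by
    filter_upwards [hequiv.symm.isBigO.eq_zero_imp, hρ0] with x hwρ hx
    exact fun h0 => hx (pow_eq_zero_iff two_ne_zero |>.1 (hwρ h0))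
  refine ⟨hw0.mono fun x => sub_ne_zero.1, ?_⟩
  have hinvρ : (fun x => (ρ x ^ 2)⁻¹) =O[l] fun x => (r x ^ 2)⁻¹ := (hρ.pow 2).inv.isBigO
  have hinvw : (fun x => (z x ^ 2 - κ)⁻¹) =O[l] fun x => (r x ^ 2)⁻¹ :=
    hequiv.inv.isBigO.trans hinvρ
  have hnum : (fun x => κ * (κ - (z x ^ 2 - ρ x ^ 2))) =O[l] fun _ => (1 : 𝕜) :=
    ((isBigO_const_one 𝕜 κ l).sub (sq_sub_sq_isBigO_one hr hρ.isBigO hz)).const_mul_left κ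
  refine ((hnum.mul hinvw).mul hinvρ).congr' ?_ (Eventually.of_forall fun x => by ring)
  filter_upwards [hw0, hρ0] with x hw hρ
  field_simp
  ring

end Perturbation

lemma tendsto_norm_natCast_atTop : Tendsto (fun l : ℕ => ‖(l : ℂ)‖) atTop atTop := by
  simpa only [Complex.norm_natCast] using tendsto_natCast_atTop_atTop

lemma isTheta_mul_natCast_add_const {a : ℂ} (ha : a ≠ 0) (b : ℂ) :
    (fun l : ℕ => a * l + b) =Θ[atTop] fun l => (l : ℂ) := by
  have hb : (fun _ => b) =o[atTop] fun l : ℕ => a * l :=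
    isLittleO_const_left.2 <| Or.inr <| by
      simpa only [Function.comp_def, norm_mul] using
        tendsto_norm_natCast_atTop.const_mul_atTop (norm_pos_iff.2 ha)
  have hequiv : (fun l : ℕ => a * l + b) ~[atTop] fun l => a * l :=
    IsLittleO.isEquivalent (hb.congr_left fun l => by simp only [Pi.sub_apply]; ring)
  exact hequiv.isTheta.trans ((isTheta_refl _ _).const_mul_left ha)

lemma zt1_isTheta (n : ℕ) : zt1 n =Θ[atTop] fun l => (l : ℂ) :=
  EventuallyEq.trans_isTheta (Eventually.of_forall fun l => by simp only [zt1]; push_cast; ring)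
    (isTheta_mul_natCast_add_const (ofReal_ne_zero.2 pi_ne_zero) ((1 + n) * π / 2))

lemma zt2_isTheta (n : ℕ) : zt2 n =Θ[atTop] fun l => (l : ℂ) :=
  EventuallyEq.trans_isTheta (Eventually.of_forall fun l => by simp only [zt2]; push_cast; ring)
    (isTheta_mul_natCast_add_const (ofReal_ne_zero.2 pi_ne_zero) (n * π / 2))

lemma ofReal_four_mul_sq_div (k : ℝ) (N : ℕ) :
    ((4 * k ^ 2 / ((N : ℝ) ^ 2 * π ^ 2) : ℝ) : ℂ) = (k : ℂ) ^ 2 / ((N : ℂ) * π / 2) ^ 2 := by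
  push_cast
  rw [div_pow, mul_pow, div_div_eq_mul_div]
  ring

lemma exists_norm_div_sq_sub_sub_div_sq_le (k C : ℝ) (L : ℕ) {z ρ : ℕ → ℂ}
    (hρ : ρ =Θ[atTop] fun l => (l : ℂ)) (hz : ∀ l, L ≤ l → ‖z l - ρ l‖ ≤ C / l) :
    ∃ C' > (0 : ℝ), ∃ L' : ℕ, ∀ l, L' ≤ l →
      z l ^ 2 ≠ (k : ℂ) ^ 2 ∧
        ‖(k : ℂ) ^ 2 / (z l ^ 2 - (k : ℂ) ^ 2) - (k : ℂ) ^ 2 / ρ l ^ 2‖ ≤ C' / (l : ℝ) ^ 4 := by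
  have hzρ : (z - ρ) =O[atTop] fun l => (l : ℂ)⁻¹ :=
    IsBigO.of_bound C <| eventually_atTop.2 ⟨L, fun l hl => by
      simpa only [Pi.sub_apply, norm_inv, Complex.norm_natCast, div_eq_mul_inv] using hz l hl⟩
  obtain ⟨hne, hbig⟩ :=
    div_sq_sub_sub_div_sq_isBigO ((k : ℂ) ^ 2) tendsto_norm_natCast_atTop hρ hzρ
  obtain ⟨C', hC', hC'bound⟩ := hbig.exists_pos
  refine ⟨C', hC', eventually_atTop.1 ((hne.and hC'bound.bound).mono fun l ⟨hl, hbound⟩ => ?_)⟩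
  refine ⟨hl, hbound.trans_eq ?_⟩
  simp only [norm_inv, norm_pow, Complex.norm_natCast, div_eq_mul_inv]

theorem stmt6_general (n : ℕ) (k : ℝ) (C : ℝ) (L : ℕ)
    (z1 z2 : ℕ → ℂ) :
    ((∀ l : ℕ, L ≤ l → f1 n k (z1 l) = 0 ∧ ‖z1 l - zt1 n l‖ ≤ C / l) →
      ∃ C' > (0 : ℝ), ∃ L' : ℕ, ∀ l : ℕ, L' ≤ l →
        (z1 l) ^ 2 ≠ (k : ℂ) ^ 2 ∧
        ‖(k : ℂ) ^ 2 / ((z1 l) ^ 2 - (k : ℂ) ^ 2) -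
            ((4 * k ^ 2 / (((1 + 2 * l + n : ℕ) : ℝ) ^ 2 * Real.pi ^ 2) : ℝ) : ℂ)‖ ≤
          C' / (l : ℝ) ^ 4) ∧
    ((∀ l : ℕ, L ≤ l → f2 n k (z2 l) = 0 ∧ ‖z2 l - zt2 n l‖ ≤ C / l) →
      ∃ C' > (0 : ℝ), ∃ L' : ℕ, ∀ l : ℕ, L' ≤ l →
        ‖(k : ℂ) ^ 2 / ((z2 l) ^ 2 - (k : ℂ) ^ 2) -
            ((4 * k ^ 2 / (((2 * l + n : ℕ) : ℝ) ^ 2 * Real.pi ^ 2) : ℝ) : ℂ)‖ ≤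
          C' / (l : ℝ) ^ 4) := by
  refine ⟨fun hz => ?_, fun hz => ?_⟩
  · obtain ⟨C', hC', L', hbound⟩ :=
      exists_norm_div_sq_sub_sub_div_sq_le k C L (zt1_isTheta n) fun l hl => (hz l hl).2
    exact ⟨C', hC', L', fun l hl => by rw [ofReal_four_mul_sq_div]; exact hbound l hl⟩
  · obtain ⟨C', hC', L', hbound⟩ :=
      exists_norm_div_sq_sub_sub_div_sq_le k C L (zt2_isTheta n) fun l hl => (hz l hl).2
    exact ⟨C', hC', L', fun l hl => by rw [ofReal_four_mul_sq_div]; exact (hbound l hl).2⟩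

/-- asymptotics of the eigenvalues `λ_l = k²/(z_l² − k²)` along the zero
sequences of `f_n^1` and `f_n^2`. -/
theorem stmt6 (n : ℕ) (hn : 1 ≤ n) (k : ℝ) (hk : 0 < k) (C : ℝ) (hC : 0 < C) (L : ℕ)
    (z1 z2 : ℕ → ℂ) :
    ((∀ l : ℕ, L ≤ l → f1 n k (z1 l) = 0 ∧ ‖z1 l - zt1 n l‖ ≤ C / l) →
      ∃ C' > (0 : ℝ), ∃ L' : ℕ, ∀ l : ℕ, L' ≤ l →
        (z1 l) ^ 2 ≠ (k : ℂ) ^ 2 ∧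
        ‖(k : ℂ) ^ 2 / ((z1 l) ^ 2 - (k : ℂ) ^ 2) -
            ((4 * k ^ 2 / (((1 + 2 * l + n : ℕ) : ℝ) ^ 2 * Real.pi ^ 2) : ℝ) : ℂ)‖ ≤
          C' / (l : ℝ) ^ 4) ∧
    ((∀ l : ℕ, L ≤ l → f2 n k (z2 l) = 0 ∧ ‖z2 l - zt2 n l‖ ≤ C / l) →
      ∃ C' > (0 : ℝ), ∃ L' : ℕ, ∀ l : ℕ, L' ≤ l →
        ‖(k : ℂ) ^ 2 / ((z2 l) ^ 2 - (k : ℂ) ^ 2) -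
            ((4 * k ^ 2 / (((2 * l + n : ℕ) : ℝ) ^ 2 * Real.pi ^ 2) : ℝ) : ℂ)‖ ≤
          C' / (l : ℝ) ^ 4) :=
  stmt6_general n k C L z1 z2
end

section
/- Fix a wave number k > 0, a parameter κ ∈ ℂ \ {0}, and a compact interval [a,b] ⊂ (1, ∞). There exists a constant C > 0 such that for every integer n ≥ 1 and every t ∈ [a,b], | i k³ √(n(n+1)) · h_n^{(1)}(k t) · ∫₀¹ j_n(k r) j_n(κ r) r² dr | ≤ C · (e/(2t))^{n+1} · |κ|^{n−1} / (n+1)^n. (This is the decay, as n → ∞, of the exterior value of the transverse-electric propagating function φ_n^{λ,1} with interior wave number κ = k√(1+1/λ).) -/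
open Complex Real Filter

/-!
Both factors are estimated termwise from their series. The power series gives
`|j_n(z)| ≤ |z|^n e^{|z|²/2} / (2n+1)!!`, and since the coefficients `(n+m)! / (2^m m!)` of the
Hankel sum increase in `m` up to `m = n`, `|h_n(x)| ≤ (2n-1)!! e^x / x^{n+1}` for `x > 0`.
In the product, `√(n(n+1)) (2n-1)!! ≤ (2n+1)!!` cancels one of the two factors `1/(2n+1)!!` of the
Bessel bounds, and the other is at most `1/(2^n n!) ≤ e^{n+1} / (2(n+1))^n`, which is the source
of `(e/(2t))^{n+1} / (n+1)^n`.
-/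

open scoped Nat

namespace Nat

lemma doubleFactorial_le_doubleFactorial_succ : ∀ n : ℕ, n‼ ≤ (n + 1)‼
  | 0 => le_rfl
  | 1 => by decide
  | n + 2 => by
    rw [doubleFactorial_add_two, show n + 2 + 1 = n + 1 + 2 by ring, doubleFactorial_add_two]
    exact Nat.mul_le_mul (by omega) (doubleFactorial_le_doubleFactorial_succ n)

lemma doubleFactorial_le_doubleFactorial_add_two_mul (n m : ℕ) : n‼ ≤ (n + 2 * m)‼ := by
  induction m with
  | zero => rfl
  | succ m ih =>
    rw [show n + 2 * (m + 1) = n + 2 * m + 2 by ring, doubleFactorial_add_two]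
    exact ih.trans (Nat.le_mul_of_pos_left _ (by omega))

lemma two_pow_mul_factorial_le_doubleFactorial (n : ℕ) : 2 ^ n * n ! ≤ (2 * n + 1)‼ :=
  doubleFactorial_two_mul n ▸ doubleFactorial_le_doubleFactorial_succ (2 * n)

lemma factorial_add_mul_doubleFactorial_le {m n : ℕ} (hmn : m ≤ n) :
    (n + m)! * (2 * n)‼ ≤ (2 * n)! * (2 * m)‼ := by
  induction hmn using Nat.decreasingInduction with
  | self => rw [two_mul]
  | of_succ m hmn ih =>
    rw [show 2 * (m + 1) = 2 * m + 2 by ring, doubleFactorial_add_two,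
      show n + (m + 1) = n + m + 1 by ring, factorial_succ] at ih
    refine Nat.le_of_mul_le_mul_left ?_ (show 0 < n + m + 1 by omega)
    calc (n + m + 1) * ((n + m)! * (2 * n)‼)
        = (n + m + 1) * (n + m)! * (2 * n)‼ := by ring
      _ ≤ (2 * n)! * ((2 * m + 2) * (2 * m)‼) := ih
      _ ≤ (2 * n)! * ((n + m + 1) * (2 * m)‼) :=
        Nat.mul_le_mul_left _ (Nat.mul_le_mul_right _ (by omega))
      _ = (n + m + 1) * ((2 * n)! * (2 * m)‼) := by ring

lemma two_mul_add_one_mul_factorial_add_le {m n : ℕ} (hmn : m ≤ n) :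
    (2 * n + 1) * (n + m)! ≤ (2 * n + 1)‼ * (2 * m)‼ := by
  refine Nat.le_of_mul_le_mul_right ?_ (doubleFactorial_pos (2 * n))
  calc (2 * n + 1) * (n + m)! * (2 * n)‼
      = (2 * n + 1) * ((n + m)! * (2 * n)‼) := by ring
    _ ≤ (2 * n + 1) * ((2 * n)! * (2 * m)‼) :=
      Nat.mul_le_mul_left _ (factorial_add_mul_doubleFactorial_le hmn)
    _ = (2 * n + 1)! * (2 * m)‼ := by rw [factorial_succ]; ring
    _ = (2 * n + 1)‼ * (2 * m)‼ * (2 * n)‼ := by rw [factorial_eq_mul_doubleFactorial]; ring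

end Nat

lemma two_mul_succ_pow_le_exp_mul_doubleFactorial (n : ℕ) :
    (2 * ((n : ℝ) + 1)) ^ n ≤ Real.exp ((n : ℝ) + 1) * (2 * n + 1)‼ := by
  have hpow : ((n : ℝ) + 1) ^ n ≤ Real.exp ((n : ℝ) + 1) * n ! := by
    rw [← div_le_iff₀ (by positivity)]
    exact Real.pow_div_factorial_le_exp _ (by positivity) n
  have hdf : (2 : ℝ) ^ n * n ! ≤ (2 * n + 1)‼ := by
    exact_mod_cast Nat.two_pow_mul_factorial_le_doubleFactorial n
  calc (2 * ((n : ℝ) + 1)) ^ n = 2 ^ n * ((n : ℝ) + 1) ^ n := mul_pow _ _ _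
    _ ≤ 2 ^ n * (Real.exp ((n : ℝ) + 1) * n !) := by gcongr
    _ = Real.exp ((n : ℝ) + 1) * (2 ^ n * n !) := by ring
    _ ≤ Real.exp ((n : ℝ) + 1) * (2 * n + 1)‼ := by gcongr

lemma norm_sphJ_le {n : ℕ} {z : ℂ} {c : ℝ} (hz : ‖z‖ ≤ c) :
    ‖sphJ n z‖ ≤ c ^ n * Real.exp (c ^ 2 / 2) / (2 * n + 1)‼ := by
  have hc : 0 ≤ c := (norm_nonneg z).trans hz
  have hseries : HasSum (fun m : ℕ => c ^ n / (2 * n + 1)‼ * ((c ^ 2 / 2) ^ m / m !))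
      (c ^ n * Real.exp (c ^ 2 / 2) / (2 * n + 1)‼) := by
    have hexp : HasSum (fun m : ℕ => (c ^ 2 / 2) ^ m / m !) (Real.exp (c ^ 2 / 2)) := by
      rw [Real.exp_eq_exp_ℝ]; exact NormedSpace.expSeries_div_hasSum_exp _
    rw [mul_div_right_comm]
    exact hexp.mul_left _
  refine tsum_of_norm_bounded hseries fun m => ?_
  have hdf : (2 * n + 1)‼ ≤ (2 * n + 2 * m + 1)‼ := by
    simpa only [add_right_comm] using
      Nat.doubleFactorial_le_doubleFactorial_add_two_mul (2 * n + 1) m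
  simp only [norm_div, norm_mul, norm_pow, norm_neg, norm_one, one_pow, one_mul,
    Complex.norm_ofNat, Complex.norm_natCast]
  calc ‖z‖ ^ (n + 2 * m) / (2 ^ m * m ! * (2 * n + 2 * m + 1)‼)
      ≤ c ^ (n + 2 * m) / (2 ^ m * m ! * (2 * n + 1)‼) := by gcongr
    _ = c ^ n / (2 * n + 1)‼ * ((c ^ 2 / 2) ^ m / m !) := by
      rw [pow_add, pow_mul, div_pow]; field_simp

-- `(2n+1)‼ / (2n+1)` is `(2n-1)‼`, written so to avoid truncated subtraction at `n = 0`.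
lemma norm_sphH_ofReal_le (n : ℕ) {x : ℝ} (hx : 0 < x) :
    ‖sphH n x‖ ≤ (2 * n + 1)‼ / (2 * n + 1) * Real.exp x / x ^ (n + 1) := by
  set K : ℝ := (2 * n + 1)‼ / (2 * n + 1)
  have hterm : ∀ m ∈ Finset.range (n + 1),
      ‖Complex.I ^ m * ((n + m)! : ℂ) / ((m ! : ℂ) * (2 * (x : ℂ)) ^ m * ((n - m)! : ℂ))‖ ≤
        K / x ^ n * (x ^ (n - m) / (n - m)!) := by
    intro m hm
    have hmn : m ≤ n := Nat.lt_succ_iff.mp (Finset.mem_range.mp hm)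
    have hcoef : ((n + m)! : ℝ) ≤ K * (2 * m)‼ := by
      rw [div_mul_eq_mul_div, le_div_iff₀ (by positivity), mul_comm]
      exact_mod_cast Nat.two_mul_add_one_mul_factorial_add_le hmn
    have hx_pow : x ^ n = x ^ (n - m) * x ^ m := by rw [← pow_add, Nat.sub_add_cancel hmn]
    simp only [norm_div, norm_mul, norm_pow, Complex.norm_I, one_pow, one_mul,
      Complex.norm_natCast, Complex.norm_ofNat, Complex.norm_real, Real.norm_of_nonneg hx.le]
    rw [hx_pow, div_mul_div_comm, div_le_div_iff₀ (by positivity) (by positivity)]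
    calc ((n + m)! : ℝ) * (x ^ (n - m) * x ^ m * (n - m)!)
        ≤ K * (2 * m)‼ * (x ^ (n - m) * x ^ m * (n - m)!) := by gcongr
      _ = K * x ^ (n - m) * (m ! * (2 * x) ^ m * (n - m)!) := by
        rw [Nat.doubleFactorial_two_mul]; push_cast; ring
  have hexp : ∑ m ∈ Finset.range (n + 1), x ^ (n - m) / (n - m)! ≤ Real.exp x := by
    rw [← Finset.sum_range_reflect]
    refine le_of_eq_of_le (Finset.sum_congr rfl fun j hj => ?_) (Real.sum_le_exp_of_nonneg hx.le _)
    rw [Nat.add_sub_cancel, Nat.sub_sub_self (Nat.lt_succ_iff.mp (Finset.mem_range.mp hj))]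
  have hsum := (norm_sum_le _ _).trans (Finset.sum_le_sum hterm)
  rw [← Finset.mul_sum] at hsum
  rw [sphH, norm_mul, norm_div, norm_mul, norm_pow, norm_neg, Complex.norm_I, one_pow, one_mul,
    Complex.norm_exp_I_mul_ofReal, Complex.norm_real, Real.norm_of_nonneg hx.le]
  calc 1 / x * ‖_‖ ≤ 1 / x * (K / x ^ n * ∑ m ∈ Finset.range (n + 1), x ^ (n - m) / (n - m)!) := by
        gcongr
    _ ≤ 1 / x * (K / x ^ n * Real.exp x) := by gcongr
    _ = K * Real.exp x / x ^ (n + 1) := by rw [pow_succ]; field_simp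

lemma norm_integral_sphJ_mul_sphJ_le (n : ℕ) (k : ℝ) (κ : ℂ) :
    ‖∫ r in (0 : ℝ)..1, sphJ n ((k : ℂ) * (r : ℂ)) * sphJ n (κ * (r : ℂ)) * (r : ℂ) ^ 2‖ ≤
      |k| ^ n * Real.exp (k ^ 2 / 2) / (2 * n + 1)‼ *
        (‖κ‖ ^ n * Real.exp (‖κ‖ ^ 2 / 2) / (2 * n + 1)‼) := by
  have hbound : ∀ r ∈ Set.uIoc (0 : ℝ) 1,
      ‖sphJ n ((k : ℂ) * (r : ℂ)) * sphJ n (κ * (r : ℂ)) * (r : ℂ) ^ 2‖ ≤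
        |k| ^ n * Real.exp (k ^ 2 / 2) / (2 * n + 1)‼ *
          (‖κ‖ ^ n * Real.exp (‖κ‖ ^ 2 / 2) / (2 * n + 1)‼) := by
    intro r hr
    rw [Set.uIoc_of_le zero_le_one] at hr
    obtain ⟨hr0, hr1⟩ := hr
    have hnorm_r : ‖(r : ℂ)‖ = r := by rw [Complex.norm_real, Real.norm_of_nonneg hr0.le]
    have hk : ‖(k : ℂ) * r‖ ≤ |k| := by
      rw [norm_mul, hnorm_r, Complex.norm_real, Real.norm_eq_abs]
      exact mul_le_of_le_one_right (abs_nonneg k) hr1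
    have hκ : ‖κ * r‖ ≤ ‖κ‖ := by
      rw [norm_mul, hnorm_r]; exact mul_le_of_le_one_right (norm_nonneg κ) hr1
    have hr2 : ‖(r : ℂ) ^ 2‖ ≤ 1 := by
      rw [norm_pow, hnorm_r]; exact pow_le_one₀ hr0.le hr1
    rw [norm_mul, norm_mul, ← sq_abs k]
    simpa using mul_le_mul (mul_le_mul (norm_sphJ_le hk) (norm_sphJ_le hκ) (norm_nonneg _)
      (by positivity)) hr2 (norm_nonneg _) (by positivity)
  simpa using intervalIntegral.norm_integral_le_of_norm_le_const hbound

lemma norm_exteriorTE_le (n : ℕ) {k t : ℝ} (hk : 0 < k) (ht : 0 < t) (κ : ℂ) :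
    ‖Complex.I * (k : ℂ) ^ 3 *
          ((Real.sqrt ((n : ℝ) * ((n : ℝ) + 1)) : ℝ) : ℂ) * sphH n ((k : ℂ) * (t : ℂ)) *
          ∫ r in (0 : ℝ)..1, sphJ n ((k : ℂ) * (r : ℂ)) * sphJ n (κ * (r : ℂ)) * (r : ℂ) ^ 2‖ ≤
      2 * k ^ 2 * (Real.exp (k * t) * Real.exp (k ^ 2 / 2) * Real.exp (‖κ‖ ^ 2 / 2)) *
        (Real.exp 1 / (2 * t)) ^ (n + 1) * ‖κ‖ ^ n / ((n : ℝ) + 1) ^ n := by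
  set D : ℝ := ↑(2 * n + 1)‼
  set E : ℝ := Real.exp (k * t) * Real.exp (k ^ 2 / 2) * Real.exp (‖κ‖ ^ 2 / 2)
  have hsqrt : Real.sqrt ((n : ℝ) * ((n : ℝ) + 1)) ≤ 2 * n + 1 :=
    Real.sqrt_le_iff.mpr ⟨by positivity, by nlinarith⟩
  have hH := norm_sphH_ofReal_le n (mul_pos hk ht)
  have hJJ := norm_integral_sphJ_mul_sphJ_le n k κ
  rw [abs_of_pos hk] at hJJ
  have hD : (2 * ((n : ℝ) + 1)) ^ n ≤ Real.exp 1 ^ (n + 1) * D := by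
    simpa using two_mul_succ_pow_le_exp_mul_doubleFactorial n
  push_cast at hH
  rw [norm_mul, norm_mul, norm_mul, norm_mul, Complex.norm_I, one_mul, norm_pow, Complex.norm_real,
    Complex.norm_real, Real.norm_of_nonneg hk.le, Real.norm_of_nonneg (Real.sqrt_nonneg _)]
  calc k ^ 3 * Real.sqrt ((n : ℝ) * ((n : ℝ) + 1)) * ‖sphH n ((k : ℂ) * (t : ℂ))‖ * ‖_‖
      ≤ k ^ 3 * (2 * n + 1) * (D / (2 * n + 1) * Real.exp (k * t) / (k * t) ^ (n + 1)) *
          (k ^ n * Real.exp (k ^ 2 / 2) / D * (‖κ‖ ^ n * Real.exp (‖κ‖ ^ 2 / 2) / D)) := by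
        gcongr
    _ = 2 * k ^ 2 * E * ‖κ‖ ^ n / (2 * t) ^ (n + 1) * (2 ^ n / D) := by
        field_simp; ring
    _ ≤ 2 * k ^ 2 * E * ‖κ‖ ^ n / (2 * t) ^ (n + 1) * (Real.exp 1 ^ (n + 1) / ((n : ℝ) + 1) ^ n) := by
        refine mul_le_mul_of_nonneg_left ?_ (by positivity)
        rw [div_le_div_iff₀ (by positivity) (by positivity)]
        simpa [mul_pow, mul_comm] using hD
    _ = _ := by rw [div_pow]; ring

theorem stmt7_general (k : ℝ) (hk : 0 < k) (κ : ℂ) (hκ : κ ≠ 0) (a b : ℝ) (ha : 1 < a) :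
    ∃ C > (0 : ℝ), ∀ n : ℕ, 1 ≤ n → ∀ t ∈ Set.Icc a b,
      ‖Complex.I * (k : ℂ) ^ 3 *
          ((Real.sqrt ((n : ℝ) * ((n : ℝ) + 1)) : ℝ) : ℂ) * sphH n ((k : ℂ) * (t : ℂ)) *
          ∫ r in (0 : ℝ)..1, sphJ n ((k : ℂ) * (r : ℂ)) * sphJ n (κ * (r : ℂ)) * (r : ℂ) ^ 2‖ ≤
        C * (Real.exp 1 / (2 * t)) ^ (n + 1) * ‖κ‖ ^ (n - 1) / ((n : ℝ) + 1) ^ n := by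
  have hκ := norm_pos_iff.mpr hκ
  refine ⟨2 * k ^ 2 * (Real.exp (k * b) * Real.exp (k ^ 2 / 2) * Real.exp (‖κ‖ ^ 2 / 2)) * ‖κ‖,
    by positivity, fun n hn t ⟨hat, htb⟩ => ?_⟩
  have ht : 0 < t := by linarith
  calc _ ≤ 2 * k ^ 2 * (Real.exp (k * t) * Real.exp (k ^ 2 / 2) * Real.exp (‖κ‖ ^ 2 / 2)) *
          (Real.exp 1 / (2 * t)) ^ (n + 1) * ‖κ‖ ^ n / ((n : ℝ) + 1) ^ n :=
        norm_exteriorTE_le n hk ht κ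
    _ ≤ 2 * k ^ 2 * (Real.exp (k * b) * Real.exp (k ^ 2 / 2) * Real.exp (‖κ‖ ^ 2 / 2)) *
          (Real.exp 1 / (2 * t)) ^ (n + 1) * ‖κ‖ ^ n / ((n : ℝ) + 1) ^ n := by gcongr
    _ = _ := by rw [← pow_sub_one_mul (by omega : n ≠ 0)]; ring

/-- decay in `n` of the exterior TE propagating function. -/
theorem stmt7 (k : ℝ) (hk : 0 < k) (κ : ℂ) (hκ : κ ≠ 0) (a b : ℝ) (ha : 1 < a)
    (hab : a ≤ b) :
    ∃ C > (0 : ℝ), ∀ n : ℕ, 1 ≤ n → ∀ t ∈ Set.Icc a b,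
      ‖Complex.I * (k : ℂ) ^ 3 *
          ((Real.sqrt ((n : ℝ) * ((n : ℝ) + 1)) : ℝ) : ℂ) * sphH n ((k : ℂ) * (t : ℂ)) *
          ∫ r in (0 : ℝ)..1, sphJ n ((k : ℂ) * (r : ℂ)) * sphJ n (κ * (r : ℂ)) * (r : ℂ) ^ 2‖ ≤
        C * (Real.exp 1 / (2 * t)) ^ (n + 1) * ‖κ‖ ^ (n - 1) / ((n : ℝ) + 1) ^ n :=
  stmt7_general k hk κ hκ a b ha
end

section
/- Let n ≥ 1 be an integer, μ ∈ ℂ, and λ ∈ ℂ with 0 < |λ − μ| < n/(n+1). Let J = J_n(μ) be the n×n Jordan block with eigenvalue μ. Then λI − J is invertible and its inverse satisfies the operator-norm bound ‖(λI − J)^{−1}‖₂ ≤ (n/(n+1))^n · (n+1) / |λ − μ|^n. -/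
open Complex Real Filter

/-- The `n×n` complex Jordan block with eigenvalue `μ`. -/
def jordanBlock (n : ℕ) (μ : ℂ) : Matrix (Fin n) (Fin n) ℂ :=
  Matrix.of fun i j => if i = j then μ else if (j : ℕ) = (i : ℕ) + 1 then 1 else 0


/-!
Write `δ = λ - μ`, `r = ‖δ‖`, `c = n / (n + 1)` and `N` for the nilpotent shift, so that
`λ • 1 - J = δ • 1 - N`. If `(δ • 1 - N) v = y`, the moduli `a j = ‖v j‖` satisfy
`r * a j ≤ ‖y j‖ + a (j + 1)` with `a n = 0`. Comparing backwards with the nonnegative solution `w`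
of `c * w j - w (j + 1) = ‖y j‖` gives `a j ≤ (c / r) ^ n * w j`, since `r ≤ c`. It remains to see
that `(c • 1 - N)⁻¹` has norm at most `n + 1`: expanding `(c * w j - w (j + 1)) ^ 2` around the
differences `w j - w (j + 1)` and bounding `w 0 ^ 2` by Cauchy–Schwarz on the telescoping sum, the
leftover terms cancel exactly because `(1 - c) * n = c`.
-/

open Finset

theorem sum_sq_le_add_one_sq_mul_sum_sq_sub_shift (n : ℕ) (W : ℕ → ℝ) (hW : W n = 0) :
    ∑ j ∈ range n, W j ^ 2 ≤
      ((n : ℝ) + 1) ^ 2 * ∑ j ∈ range n, ((n : ℝ) / (n + 1) * W j - W (j + 1)) ^ 2 := by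
  set c : ℝ := n / (n + 1)
  have hc : 1 - c = 1 / (n + 1) := by simp only [c]; field_simp; ring
  have hc0 : 0 ≤ 1 - c := by rw [hc]; positivity
  have hcn : (1 - c) * n = c := by rw [hc]; ring
  set S := ∑ j ∈ range n, W j ^ 2
  set D := ∑ j ∈ range n, (W j - W (j + 1)) ^ 2
  have hshift : ∑ j ∈ range n, W (j + 1) ^ 2 = S - W 0 ^ 2 := by
    have := sum_range_succ' (fun j => W j ^ 2) n
    rw [sum_range_succ, hW] at this
    linarith
  have hexpand : ∑ j ∈ range n, (c * W j - W (j + 1)) ^ 2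
      = c * D + (1 - c) ^ 2 * S - (1 - c) * W 0 ^ 2 := by
    have hterm : ∀ j, (c * W j - W (j + 1)) ^ 2
        = c * (W j - W (j + 1)) ^ 2 + (c ^ 2 - c) * W j ^ 2 + (1 - c) * W (j + 1) ^ 2 :=
      fun j => by ring
    simp only [hterm, sum_add_distrib, ← mul_sum, hshift]
    ring
  have hW0 : W 0 ^ 2 ≤ n * D := by
    have := sq_sum_le_card_mul_sum_sq (s := range n) (f := fun j => W j - W (j + 1))
    rwa [sum_range_sub' W n, hW, sub_zero, card_range] at this
  have hcross : (1 - c) * W 0 ^ 2 ≤ c * D :=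
    calc (1 - c) * W 0 ^ 2 ≤ (1 - c) * (n * D) := mul_le_mul_of_nonneg_left hW0 hc0
      _ = c * D := by rw [← mul_assoc, hcn]
  calc S = ((n : ℝ) + 1) ^ 2 * ((1 - c) ^ 2 * S) := by rw [hc]; field_simp
    _ ≤ ((n : ℝ) + 1) ^ 2 * (c * D + (1 - c) ^ 2 * S - (1 - c) * W 0 ^ 2) := by
        gcongr
        linarith
    _ = _ := by rw [hexpand]

/-- Back substitution for `c * w j - w (j + 1) = E j` (`j < n`), `w n = 0`; that is,
`w = (c - N)⁻¹ E` for the shift `N`. -/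
noncomputable def backSolve (n : ℕ) (c : ℝ) (E : ℕ → ℝ) (j : ℕ) : ℝ :=
  c ^ j * ∑ k ∈ Ico j n, E k / c ^ (k + 1)

section backSolve

variable {n : ℕ} {c : ℝ} {E : ℕ → ℝ}

@[simp]
theorem backSolve_self : backSolve n c E n = 0 := by
  simp [backSolve]

theorem mul_backSolve_sub_backSolve_succ (hc : c ≠ 0) {j : ℕ} (hj : j < n) :
    c * backSolve n c E j - backSolve n c E (j + 1) = E j := by
  rw [backSolve, backSolve, sum_eq_sum_Ico_succ_bot hj, ← mul_assoc, ← pow_succ', mul_add,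
    add_sub_cancel_right]
  field_simp

theorem backSolve_nonneg (hc : 0 ≤ c) (hE : ∀ j, 0 ≤ E j) (j : ℕ) : 0 ≤ backSolve n c E j :=
  mul_nonneg (by positivity) (sum_nonneg fun k _ => div_nonneg (hE k) (by positivity))

theorem le_pow_mul_backSolve {r : ℝ} {a : ℕ → ℝ} (hr : 0 < r) (hrc : r ≤ c)
    (hE : ∀ j, 0 ≤ E j) (ha : a n ≤ 0) (hrec : ∀ j < n, r * a j ≤ E j + a (j + 1))
    {j : ℕ} (hj : j ≤ n) : a j ≤ (c / r) ^ (n - j) * backSolve n c E j := by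
  have hc : 0 < c := hr.trans_le hrc
  induction hj using Nat.decreasingInduction with
  | self => simpa using ha
  | of_succ k hk ih =>
    have hpow : 1 ≤ (c / r) ^ (n - (k + 1)) := one_le_pow₀ ((one_le_div hr).2 hrc)
    have hw := mul_backSolve_sub_backSolve_succ (E := E) hc.ne' hk
    rw [show n - k = n - (k + 1) + 1 by omega, pow_succ, ← mul_le_mul_iff_right₀ hr]
    calc r * a k ≤ (c / r) ^ (n - (k + 1)) * (c * backSolve n c E k) := by
          nlinarith [hrec k hk, mul_nonneg (sub_nonneg.2 hpow) (hE k)]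
      _ = r * ((c / r) ^ (n - (k + 1)) * (c / r) * backSolve n c E k) := by field_simp

end backSolve

theorem sum_sq_le_of_mul_le_add_succ {n : ℕ} {r : ℝ} (hr : 0 < r) (hrc : r ≤ n / (n + 1))
    {a E : ℕ → ℝ} (ha : ∀ j, 0 ≤ a j) (han : a n = 0) (hE : ∀ j, 0 ≤ E j)
    (hrec : ∀ j < n, r * a j ≤ E j + a (j + 1)) :
    ∑ j ∈ range n, a j ^ 2 ≤
      ((n / (n + 1) / r) ^ n * (n + 1)) ^ 2 * ∑ j ∈ range n, E j ^ 2 := by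
  set c : ℝ := n / (n + 1)
  set w := backSolve n c E
  have hc : 0 < c := hr.trans_le hrc
  have hcmp : ∀ j ∈ range n, a j ≤ (c / r) ^ n * w j := fun j hj => by
    have hj : j < n := mem_range.1 hj
    calc a j ≤ (c / r) ^ (n - j) * w j := le_pow_mul_backSolve hr hrc hE han.le hrec hj.le
      _ ≤ (c / r) ^ n * w j := by
        gcongr
        · exact backSolve_nonneg hc.le hE j
        · exact (one_le_div hr).2 hrc
        · omega
  have hw : ∑ j ∈ range n, w j ^ 2 ≤ (n + 1) ^ 2 * ∑ j ∈ range n, E j ^ 2 := by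
    convert sum_sq_le_add_one_sq_mul_sum_sq_sub_shift n w backSolve_self using 3 with j hj
    rw [mul_backSolve_sub_backSolve_succ hc.ne' (mem_range.1 hj)]
  calc ∑ j ∈ range n, a j ^ 2 ≤ ∑ j ∈ range n, ((c / r) ^ n * w j) ^ 2 :=
        sum_le_sum fun j hj => pow_le_pow_left₀ (ha j) (hcmp j hj) 2
    _ = ((c / r) ^ n) ^ 2 * ∑ j ∈ range n, w j ^ 2 := by simp only [mul_pow, mul_sum]
    _ ≤ ((c / r) ^ n) ^ 2 * ((n + 1) ^ 2 * ∑ j ∈ range n, E j ^ 2) := by gcongr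
    _ = _ := by ring

def zeroExtend {α : Type*} [Zero α] {n : ℕ} (v : Fin n → α) (j : ℕ) : α :=
  if h : j < n then v ⟨j, h⟩ else 0

section zeroExtend

variable {α : Type*} {n : ℕ}

@[simp]
theorem zeroExtend_val [Zero α] (v : Fin n → α) (i : Fin n) : zeroExtend v i = v i := by
  simp [zeroExtend]

@[simp]
theorem zeroExtend_self [Zero α] (v : Fin n → α) : zeroExtend v n = 0 := by
  simp [zeroExtend]

theorem sum_ite_val_eq_zeroExtend [AddCommMonoid α] (v : Fin n → α) (m : ℕ) :
    ∑ k : Fin n, (if (k : ℕ) = m then v k else 0) = zeroExtend v m := by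
  have := Fin.sum_univ_eq_sum_range (fun k => if k = m then zeroExtend v k else 0) n
  simp only [zeroExtend_val] at this
  rw [this, sum_ite_eq']
  split_ifs with h
  · rfl
  · simp [zeroExtend, mem_range.not.1 h]

end zeroExtend

open scoped Matrix

theorem jordanBlock_mulVec_apply {n : ℕ} (μ : ℂ) (v : Fin n → ℂ) (i : Fin n) :
    (jordanBlock n μ *ᵥ v) i = μ * v i + zeroExtend v (i + 1) := by
  have hentry : ∀ k : Fin n, jordanBlock n μ i k * v k
      = (if i = k then μ * v k else 0) + (if (k : ℕ) = i + 1 then v k else 0) := fun k => by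
    by_cases hik : i = k
    · subst hik; simp [jordanBlock]
    · simp [jordanBlock, hik]
  simp only [Matrix.mulVec, dotProduct, hentry, sum_add_distrib, sum_ite_eq,
    sum_ite_val_eq_zeroExtend, mem_univ, if_true]

theorem det_smul_one_sub_jordanBlock (n : ℕ) (μ lam : ℂ) :
    (lam • (1 : Matrix (Fin n) (Fin n) ℂ) - jordanBlock n μ).det = (lam - μ) ^ n := by
  rw [Matrix.det_of_isUpperTriangular]
  · simp [jordanBlock]
  · intro i j hij
    have hji : (j : ℕ) < i := hij
    have hne : i ≠ j := Fin.ne_of_gt hij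
    simp [jordanBlock, Matrix.one_apply_ne hne, hne, show (j : ℕ) ≠ i + 1 by omega]

theorem norm_sq_eq_sum_range_zeroExtend {𝕜 : Type*} [RCLike 𝕜] {n : ℕ}
    (v : EuclideanSpace 𝕜 (Fin n)) :
    ‖v‖ ^ 2 = ∑ j ∈ range n, ‖zeroExtend v.ofLp j‖ ^ 2 := by
  rw [EuclideanSpace.norm_sq_eq, ← Fin.sum_univ_eq_sum_range (fun j => ‖zeroExtend v.ofLp j‖ ^ 2)]
  simp

theorem norm_le_of_toEuclideanLin_smul_one_sub_jordanBlock_eq {n : ℕ} {μ lam : ℂ}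
    (h1 : 0 < ‖lam - μ‖) (h2 : ‖lam - μ‖ ≤ n / (n + 1)) {v y : EuclideanSpace ℂ (Fin n)}
    (h : Matrix.toEuclideanLin (lam • (1 : Matrix (Fin n) (Fin n) ℂ) - jordanBlock n μ) v = y) :
    ‖v‖ ≤ ((n : ℝ) / (n + 1)) ^ n * (n + 1) / ‖lam - μ‖ ^ n * ‖y‖ := by
  have hrec : ∀ j < n, ‖lam - μ‖ * ‖zeroExtend v.ofLp j‖
      ≤ ‖zeroExtend y.ofLp j‖ + ‖zeroExtend v.ofLp (j + 1)‖ := fun j hj => by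
    obtain ⟨i, rfl⟩ : ∃ i : Fin n, (i : ℕ) = j := ⟨⟨j, hj⟩, rfl⟩
    have hyi : y.ofLp i = (lam - μ) * v.ofLp i - zeroExtend v.ofLp (i + 1) := by
      simp only [← h, Matrix.toLpLin_apply, Matrix.sub_mulVec, Matrix.smul_mulVec,
        Matrix.one_mulVec, Pi.sub_apply, Pi.smul_apply, smul_eq_mul, jordanBlock_mulVec_apply]
      ring
    have := norm_sub_norm_le ((lam - μ) * v.ofLp i) (zeroExtend v.ofLp (i + 1))
    rw [zeroExtend_val, zeroExtend_val, hyi, ← norm_mul]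
    linarith
  have hsq := sum_sq_le_of_mul_le_add_succ h1 h2 (fun j => norm_nonneg _) (by simp)
    (fun j => norm_nonneg _) hrec
  rw [← norm_sq_eq_sum_range_zeroExtend, ← norm_sq_eq_sum_range_zeroExtend, ← mul_pow] at hsq
  rw [div_pow, div_mul_eq_mul_div] at hsq
  exact (pow_le_pow_iff_left₀ (norm_nonneg _) (by positivity) two_ne_zero).1 hsq

theorem stmt16_general (n : ℕ) (μ lam : ℂ)
    (h1 : 0 < ‖lam - μ‖) (h2 : ‖lam - μ‖ < (n : ℝ) / ((n : ℝ) + 1)) :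
    ∃ B : Matrix (Fin n) (Fin n) ℂ,
      (lam • (1 : Matrix (Fin n) (Fin n) ℂ) - jordanBlock n μ) * B = 1 ∧
      B * (lam • (1 : Matrix (Fin n) (Fin n) ℂ) - jordanBlock n μ) = 1 ∧
      ∀ x : EuclideanSpace ℂ (Fin n),
        ‖Matrix.toEuclideanLin B x‖ ≤
          ((n : ℝ) / ((n : ℝ) + 1)) ^ n * ((n : ℝ) + 1) / (‖lam - μ‖) ^ n * ‖x‖ := by
  have hA : IsUnit (lam • (1 : Matrix (Fin n) (Fin n) ℂ) - jordanBlock n μ).det := by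
    rw [det_smul_one_sub_jordanBlock]
    exact (norm_pos_iff.1 h1).isUnit.pow n
  refine ⟨_, Matrix.mul_nonsing_inv _ hA, Matrix.nonsing_inv_mul _ hA, fun x => ?_⟩
  apply norm_le_of_toEuclideanLin_smul_one_sub_jordanBlock_eq h1 h2.le
  simp only [Matrix.toLpLin_apply, Matrix.mulVec_mulVec, Matrix.mul_nonsing_inv _ hA,
    Matrix.one_mulVec]

/-- operator-norm bound on the resolvent of a Jordan block for
`0 < |λ − μ| < n/(n+1)`. -/
theorem stmt16 (n : ℕ) (hn : 1 ≤ n) (μ lam : ℂ)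
    (h1 : 0 < ‖lam - μ‖) (h2 : ‖lam - μ‖ < (n : ℝ) / ((n : ℝ) + 1)) :
    ∃ B : Matrix (Fin n) (Fin n) ℂ,
      (lam • (1 : Matrix (Fin n) (Fin n) ℂ) - jordanBlock n μ) * B = 1 ∧
      B * (lam • (1 : Matrix (Fin n) (Fin n) ℂ) - jordanBlock n μ) = 1 ∧
      ∀ x : EuclideanSpace ℂ (Fin n),
        ‖Matrix.toEuclideanLin B x‖ ≤
          ((n : ℝ) / ((n : ℝ) + 1)) ^ n * ((n : ℝ) + 1) / (‖lam - μ‖) ^ n * ‖x‖ :=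
  stmt16_general n μ lam h1 h2
end

section
/- Let n ≥ 1 be an integer and α, β ∈ ℂ. Then ∫₀¹ [ n(n+1) j_n(α r) j_n(β r) + 𝒥_n(α r) 𝒥_n(β r) ] dr = (α β/(2n+1)) · [ (n+1) ∫₀¹ j_{n−1}(α r) j_{n−1}(β r) r² dr + n ∫₀¹ j_{n+1}(α r) j_{n+1}(β r) r² dr ]. -/
open Complex Real Filter

/-!
Write `A = z j_{n-1}(z)` and `B = z j_{n+1}(z)`. Comparing power-series coefficients gives the
two classical recurrences `(2n+1) j_n = A + B` and `(2n+1) 𝒥_n = (n+1) A - n B`. Substituting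
them into `n(n+1) j_n(a) j_n(b) + 𝒥_n(a) 𝒥_n(b)`, the mixed terms `A(a) B(b)` and `B(a) A(b)`
cancel and what is left is `((n+1) A(a) A(b) + n B(a) B(b)) / (2n+1)`; with `a = αr`, `b = βr`
the identity is this pointwise one, integrated over `[0, 1]`.
-/

section PowerSeries

variable {a : ℕ → ℂ} {e : ℕ → ℕ}

lemma norm_mul_pow_le_of_mem_ball {R : ℝ} {w : ℂ} (hw : w ∈ Metric.ball 0 R) (c : ℂ)
    (k : ℕ) : ‖c * w ^ k‖ ≤ ‖c‖ * R ^ k := by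
  rw [norm_mul, norm_pow]
  gcongr
  exact (mem_ball_zero_iff.mp hw).le

theorem differentiable_tsum_mul_pow
    (ha : ∀ R : ℝ, 0 ≤ R → Summable fun m => ‖a m‖ * R ^ e m) :
    Differentiable ℂ fun w => ∑' m, a m * w ^ e m := by
  intro z
  have hz : z ∈ Metric.ball (0 : ℂ) (‖z‖ + 1) := by simp
  refine (differentiableOn_tsum_of_summable_norm (ha _ (by positivity))
    (fun m => (differentiable_const _ |>.mul (differentiable_pow _)).differentiableOn)
    Metric.isOpen_ball fun m w hw => norm_mul_pow_le_of_mem_ball hw _ _).differentiableAt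
    (Metric.isOpen_ball.mem_nhds hz)

theorem hasSum_mul_deriv_tsum_mul_pow
    (ha : ∀ R : ℝ, 0 ≤ R → Summable fun m => ‖a m‖ * R ^ e m) (z : ℂ) :
    HasSum (fun m => (e m : ℂ) * a m * z ^ e m)
      (z * deriv (fun w => ∑' m, a m * w ^ e m) z) := by
  have hz : z ∈ Metric.ball (0 : ℂ) (‖z‖ + 1) := by simp
  have h := hasSum_deriv_of_summable_norm (ha _ (by positivity))
    (fun m => (differentiable_const _ |>.mul (differentiable_pow _)).differentiableOn)
    Metric.isOpen_ball (fun m w hw => norm_mul_pow_le_of_mem_ball hw _ _) hz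
  refine (h.mul_left z).congr_fun fun m => ?_
  simp only [deriv_const_mul_field', deriv_pow_field]
  rcases eq_or_ne (e m) 0 with h0 | h0
  · simp [h0]
  · rw [← mul_pow_sub_one h0 z]
    ring

end PowerSeries

theorem eq_of_hasSum_pow_shift {R : Type*} [Ring R] [TopologicalSpace R]
    [IsTopologicalAddGroup R] [T2Space R] {u v : ℕ → R} {z A B : R} {p : ℕ}
    (hA : HasSum (fun m => u m * z ^ (p + 2 * m)) A)
    (hB : HasSum (fun m => v m * z ^ (p + 2 + 2 * m)) B)
    (h0 : u 0 = 0) (hs : ∀ m, u (m + 1) = v m) : A = B := by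
  rw [← hasSum_nat_add_iff' 1] at hA
  simp only [Finset.range_one, Finset.sum_singleton, h0, zero_mul, sub_zero] at hA
  refine hA.unique (hB.congr_fun fun m => ?_)
  rw [hs, mul_add 2 m 1]
  ring_nf

open scoped Nat

noncomputable def sphJCoeff (n m : ℕ) : ℂ := (-1) ^ m / (2 ^ m * m ! * (2 * n + 2 * m + 1)‼)

lemma sphJ_eq_tsum (n : ℕ) (z : ℂ) : sphJ n z = ∑' m, sphJCoeff n m * z ^ (n + 2 * m) :=
  tsum_congr fun m => by rw [sphJCoeff]; ring

lemma norm_sphJCoeff_le (n m : ℕ) : ‖sphJCoeff n m‖ ≤ (m ! : ℝ)⁻¹ := by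
  have hD : (2 ^ m * m ! * (2 * n + 2 * m + 1)‼ : ℂ) =
      ((2 ^ m * m ! * (2 * n + 2 * m + 1)‼ : ℕ) : ℂ) := by
    push_cast; ring
  rw [sphJCoeff, norm_div, norm_pow, norm_neg, norm_one, one_pow, one_div, hD, Complex.norm_natCast]
  refine inv_anti₀ (by positivity) ?_
  exact_mod_cast (Nat.le_mul_of_pos_left _ (by positivity)).trans
    (Nat.le_mul_of_pos_right _ (Nat.doubleFactorial_pos _))

lemma summable_norm_sphJCoeff_mul_pow (n : ℕ) {R : ℝ} (hR : 0 ≤ R) :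
    Summable fun m => ‖sphJCoeff n m‖ * R ^ (n + 2 * m) := by
  refine .of_nonneg_of_le (fun m => by positivity) (fun m => ?_)
    ((Real.summable_pow_div_factorial (R ^ 2)).mul_left (R ^ n))
  rw [pow_add, pow_mul, mul_div_assoc', div_eq_mul_inv, mul_comm ‖_‖]
  gcongr
  exact norm_sphJCoeff_le n m

lemma hasSum_sphJ (n : ℕ) (z : ℂ) :
    HasSum (fun m => sphJCoeff n m * z ^ (n + 2 * m)) (sphJ n z) := by
  rw [sphJ_eq_tsum]
  refine (Summable.of_norm ?_).hasSum
  simpa only [norm_mul, norm_pow] using summable_norm_sphJCoeff_mul_pow n (norm_nonneg z)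

lemma hasSum_mul_sphJ (n : ℕ) (z : ℂ) :
    HasSum (fun m => sphJCoeff n m * z ^ (n + 1 + 2 * m)) (z * sphJ n z) :=
  ((hasSum_sphJ n z).mul_left z).congr_fun fun m => by ring

lemma differentiable_sphJ (n : ℕ) : Differentiable ℂ (sphJ n) := by
  rw [funext (sphJ_eq_tsum n)]
  exact differentiable_tsum_mul_pow fun R hR => summable_norm_sphJCoeff_mul_pow n hR

lemma hasSum_calJ (n : ℕ) (z : ℂ) :
    HasSum (fun m => ((n : ℂ) + 2 * m + 1) * sphJCoeff n m * z ^ (n + 2 * m)) (calJ n z) := by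
  have h := hasSum_mul_deriv_tsum_mul_pow
    (fun R hR => summable_norm_sphJCoeff_mul_pow n hR) z
  rw [← funext (sphJ_eq_tsum n)] at h
  refine ((hasSum_sphJ n z).add h).congr_fun fun m => ?_
  push_cast
  ring

lemma sphJCoeff_eq_mul_succ_order (n m : ℕ) :
    sphJCoeff n m = (2 * n + 2 * m + 3) * sphJCoeff (n + 1) m := by
  have hX : (2 * n + 2 * m + 3 : ℂ) = ((2 * n + 2 * m + 1 + 2 : ℕ) : ℂ) := by push_cast; ring
  rw [hX, sphJCoeff, sphJCoeff, show 2 * (n + 1) + 2 * m + 1 = 2 * n + 2 * m + 1 + 2 by ring,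
    Nat.doubleFactorial_add_two, Nat.cast_mul,
    mul_left_comm _ ((2 * n + 2 * m + 1 + 2 : ℕ) : ℂ), mul_div_assoc',
    mul_div_mul_left _ _ (Nat.cast_ne_zero.2 (Nat.succ_ne_zero _))]

lemma sphJCoeff_succ_order (n m : ℕ) :
    sphJCoeff (n + 1) m = -2 * (m + 1) * sphJCoeff n (m + 1) := by
  simp only [sphJCoeff, show 2 * n + 2 * (m + 1) + 1 = 2 * (n + 1) + 2 * m + 1 by ring,
    Nat.factorial_succ, pow_succ]
  push_cast
  field_simp

theorem sphJ_recurrence (n : ℕ) (z : ℂ) :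
    z * sphJ n z + z * sphJ (n + 2) z = (2 * n + 3) * sphJ (n + 1) z := by
  have hA : HasSum (fun m => ((2 * n + 3) * sphJCoeff (n + 1) m - sphJCoeff n m) *
      z ^ (n + 1 + 2 * m)) ((2 * n + 3) * sphJ (n + 1) z - z * sphJ n z) :=
    (((hasSum_sphJ (n + 1) z).mul_left _).sub (hasSum_mul_sphJ n z)).congr_fun fun m => by ring
  have hB : HasSum (fun m => sphJCoeff (n + 2) m * z ^ (n + 1 + 2 + 2 * m))
      (z * sphJ (n + 2) z) :=
    (hasSum_mul_sphJ (n + 2) z).congr_fun fun m => by ring_nf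
  have := eq_of_hasSum_pow_shift hA hB
    (by linear_combination (sphJCoeff_eq_mul_succ_order n 0).symm)
    fun m => by
      have h1 := sphJCoeff_eq_mul_succ_order n (m + 1)
      have h2 := sphJCoeff_succ_order (n + 1) m
      push_cast at h1 h2 ⊢
      linear_combination -h1 - h2
  linear_combination -this

theorem calJ_recurrence (n : ℕ) (z : ℂ) :
    (2 * n + 3) * calJ (n + 1) z =
      (n + 2) * (z * sphJ n z) - (n + 1) * (z * sphJ (n + 2) z) := by
  have hA : HasSum (fun m => ((2 * n + 3) * (n + 2 * m + 2) * sphJCoeff (n + 1) m -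
      (n + 2) * sphJCoeff n m) * z ^ (n + 1 + 2 * m))
      ((2 * n + 3) * calJ (n + 1) z - (n + 2) * (z * sphJ n z)) :=
    (((hasSum_calJ (n + 1) z).mul_left _).sub ((hasSum_mul_sphJ n z).mul_left _)).congr_fun
      fun m => by push_cast; ring
  have hB : HasSum (fun m => -(n + 1) * sphJCoeff (n + 2) m * z ^ (n + 1 + 2 + 2 * m))
      (-(n + 1) * (z * sphJ (n + 2) z)) :=
    ((hasSum_mul_sphJ (n + 2) z).mul_left _).congr_fun fun m => by ring_nf
  have := eq_of_hasSum_pow_shift hA hB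
    (by linear_combination -(n + 2 : ℂ) * sphJCoeff_eq_mul_succ_order n 0)
    fun m => by
      have h1 := sphJCoeff_eq_mul_succ_order n (m + 1)
      have h2 := sphJCoeff_succ_order (n + 1) m
      push_cast at h1 h2 ⊢
      linear_combination -(n + 2 : ℂ) * h1 + (n + 1 : ℂ) * h2
  linear_combination this

theorem sphJ_mul_sphJ_add_calJ_mul_calJ (n : ℕ) (a b : ℂ) :
    (2 * n + 3) * ((n + 1) * (n + 2) * sphJ (n + 1) a * sphJ (n + 1) b +
        calJ (n + 1) a * calJ (n + 1) b) =
      (n + 2) * (a * sphJ n a * (b * sphJ n b)) +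
        (n + 1) * (a * sphJ (n + 2) a * (b * sphJ (n + 2) b)) := by
  have hX : (2 * n + 3 : ℂ) ≠ 0 := by exact_mod_cast (2 * n + 2).succ_ne_zero
  refine mul_left_cancel₀ hX ?_
  linear_combination (n + 1) * (n + 2) * (-(2 * n + 3) * sphJ (n + 1) b * sphJ_recurrence n a -
      (a * sphJ n a + a * sphJ (n + 2) a) * sphJ_recurrence n b) +
    (2 * n + 3) * calJ (n + 1) b * calJ_recurrence n a +
    ((n + 2) * (a * sphJ n a) - (n + 1) * (a * sphJ (n + 2) a)) * calJ_recurrence n b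

/-- the Lommel-type integral identity. -/
theorem stmt17 (n : ℕ) (hn : 1 ≤ n) (α β : ℂ) :
    (∫ r in (0 : ℝ)..1,
        (((n : ℂ) * ((n : ℂ) + 1)) * sphJ n (α * (r : ℂ)) * sphJ n (β * (r : ℂ)) +
          calJ n (α * (r : ℂ)) * calJ n (β * (r : ℂ)))) =
      (α * β / (2 * (n : ℂ) + 1)) *
        (((n : ℂ) + 1) *
            (∫ r in (0 : ℝ)..1,
              sphJ (n - 1) (α * (r : ℂ)) * sphJ (n - 1) (β * (r : ℂ)) * (r : ℂ) ^ 2) +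
          (n : ℂ) *
            (∫ r in (0 : ℝ)..1,
              sphJ (n + 1) (α * (r : ℂ)) * sphJ (n + 1) (β * (r : ℂ)) * (r : ℂ) ^ 2)) := by
  obtain ⟨n, rfl⟩ : ∃ k, n = k + 1 := ⟨n - 1, by omega⟩
  have hintegrable (j : ℕ) :
      IntervalIntegrable (fun r : ℝ => sphJ j (α * r) * sphJ j (β * r) * (r : ℂ) ^ 2)
        MeasureTheory.volume 0 1 := by
    have := (differentiable_sphJ j).continuous
    exact Continuous.intervalIntegrable (by fun_prop) _ _
  rw [← intervalIntegral.integral_const_mul, ← intervalIntegral.integral_const_mul,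
    ← intervalIntegral.integral_add ((hintegrable _).const_mul _) ((hintegrable _).const_mul _),
    ← intervalIntegral.integral_const_mul]
  refine intervalIntegral.integral_congr fun r _ => ?_
  have hX : (2 * ((n + 1 : ℕ) : ℂ) + 1) ≠ 0 := by exact_mod_cast (2 * n + 2).succ_ne_zero
  rw [div_mul_eq_mul_div, eq_div_iff hX, Nat.add_sub_cancel]
  push_cast
  linear_combination sphJ_mul_sphJ_add_calJ_mul_calJ n (α * r) (β * r)
end
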